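/- arXiv:2605.02678 — 4 statements merged into one kernel-verified Lean document; each statement's English description precedes it below -/
import Mathlib

section
/- Let A_1,…,A_k be pairwise disjoint subsets of the vertex set of G with 1 ≤ k ≤ s, |A_1| = 2 and |A_2| = ⋯ = |A_k| = 1 (so a = k+1). Under the uniform probability measure on Φ_c, the probability that, for each j ∈ [k], all vertices of A_j receive one common color and these k colors are pairwise distinct, equals ((k−1)! / n^{(k+1)}) · [ (n−k)·e_k − (k+1)·e_{k+1} ], where e_k = E_k(c_1,…,c_s) is the degree-k elementary symmetric polynomial evaluated at the composition c. -/
open Finset MeasureTheory Filter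
open scoped Classical

/-- The finset of `c`-colorings of the vertex set `Fin n` with `s` colors:
maps `f : Fin n → Fin s` whose color class of color `i` has exactly `c i` elements. -/
noncomputable def colorings (n s : ℕ) (c : Fin s → ℕ) : Finset (Fin n → Fin s) :=
  Finset.univ.filter fun f => ∀ i, (Finset.univ.filter fun v => f v = i).card = c i

/-- Probability of an event under the uniform measure on the set of `c`-colorings. -/
noncomputable def colProb (n s : ℕ) (c : Fin s → ℕ) (E : (Fin n → Fin s) → Prop) : ℝ :=
  (((colorings n s c).filter fun f => E f).card : ℝ) / ((colorings n s c).card : ℝ)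

/-- Expectation of a real statistic under the uniform measure on `c`-colorings. -/
noncomputable def colExp (n s : ℕ) (c : Fin s → ℕ) (Y : (Fin n → Fin s) → ℝ) : ℝ :=
  (∑ f ∈ colorings n s c, Y f) / ((colorings n s c).card : ℝ)

/-- Variance of a real statistic under the uniform measure on `c`-colorings. -/
noncomputable def colVar (n s : ℕ) (c : Fin s → ℕ) (Y : (Fin n → Fin s) → ℝ) : ℝ :=
  colExp n s c fun f => (Y f - colExp n s c Y) ^ 2

/-- The number of edges of `G`. -/
noncomputable def edgeCount {n : ℕ} (G : SimpleGraph (Fin n)) : ℕ := G.edgeSet.ncard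

/-- `M_i(G)(f)`: the number of edges of `G` whose two endpoints both receive color `i`
under the coloring `f`. -/
noncomputable def monoEdges {n s : ℕ} (G : SimpleGraph (Fin n)) (i : Fin s)
    (f : Fin n → Fin s) : ℕ :=
  {e ∈ G.edgeSet | ∀ v ∈ e, f v = i}.ncard

/-- `M(G)(f) = ∑ i, M_i(G)(f)`: the total number of monochromatic edges. -/
noncomputable def monoTotal {n s : ℕ} (G : SimpleGraph (Fin n)) (f : Fin n → Fin s) : ℕ :=
  ∑ i, monoEdges G i f

/-- `L(G)(f) = m - M(G)(f)`: the number of bichromatic edges. -/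
noncomputable def biEdges {n s : ℕ} (G : SimpleGraph (Fin n)) (f : Fin n → Fin s) : ℝ :=
  (edgeCount G : ℝ) - (monoTotal G f : ℝ)

/-- `Σ₂(G)`: the sum of the squares of the degrees of `G`. -/
noncomputable def sigma2 {n : ℕ} (G : SimpleGraph (Fin n)) : ℕ :=
  ∑ v, ((G.neighborSet v).ncard) ^ 2

/-- `ζ(G) = √(Σ₂(G)) / m`. -/
noncomputable def zeta {n : ℕ} (G : SimpleGraph (Fin n)) : ℝ :=
  Real.sqrt (sigma2 G) / (edgeCount G : ℝ)

/-- The value `e_k = E_k(c_1,…,c_s)` of the degree-`k` elementary symmetric polynomial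
at the composition `c`. -/
def esymmVal (s : ℕ) (c : Fin s → ℕ) (k : ℕ) : ℕ :=
  ∑ A ∈ Finset.univ.powersetCard k, ∏ i ∈ A, c i

/-! Since the blocks are disjoint and nonempty, the event is the disjoint union, over injective
assignments `g` of colours to blocks, of the events "`f = g j` on `A j` for all `j`". Swapping a
fresh vertex with any other vertex outside a set `D` permutes colourings, so prescribing the
colours on `D` has probability `∏ᵢ c_i^{(d_i)} / n^{(|D|)}`, `d_i` being the number of prescribed
vertices of colour `i`. Summing over `g` gives
`(k-1)! / n^{(k+1)} · ∑ᵢ c_i (c_i - 1) E_{k-1}(c without c_i)`, and the two identities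
`c_i E_m(c without c_i) = E_{m+1}(c) - E_{m+1}(c without c_i)` and
`∑ᵢ c_i E_m(c without c_i) = (m + 1) E_{m+1}(c)` turn the sum into `(n - k) e_k - (k + 1) e_{k+1}`.
-/

section ElementarySymmetric

variable {α R : Type*} [DecidableEq α] [CommSemiring R]

def esymmOn (x : α → R) (m : ℕ) (U : Finset α) : R :=
  ∑ S ∈ U.powersetCard m, ∏ i ∈ S, x i

lemma esymmOn_insert (x : α → R) (m : ℕ) {i : α} {U : Finset α} (hi : i ∉ U) :
    esymmOn x (m + 1) (insert i U) = esymmOn x (m + 1) U + x i * esymmOn x m U := by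
  have hnot : ∀ S ∈ U.powersetCard m, i ∉ S := fun S hS h => hi ((mem_powersetCard.mp hS).1 h)
  rw [esymmOn, powersetCard_succ_insert hi, sum_union, sum_image, esymmOn, esymmOn, mul_sum]
  · exact congrArg _ (sum_congr rfl fun S hS => prod_insert (hnot S hS))
  · intro S hS T hT hST
    simpa [erase_insert (hnot S hS), erase_insert (hnot T hT)] using congrArg (erase · i) hST
  · refine disjoint_right.mpr fun S hS hS' => ?_
    obtain ⟨T, -, rfl⟩ := mem_image.mp hS
    exact hi ((mem_powersetCard.mp hS').1 (mem_insert_self i T))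

lemma sum_prod_insert_powersetCard_erase (x : α → R) (m : ℕ) {U : Finset α} {i : α}
    (hi : i ∈ U) :
    ∑ S ∈ (U.erase i).powersetCard m, ∏ j ∈ insert i S, x j
      = ∑ T ∈ U.powersetCard (m + 1) with i ∈ T, ∏ j ∈ T, x j := by
  have hiS : ∀ S ∈ (U.erase i).powersetCard m, i ∉ S :=
    fun S hS h => (mem_erase.mp ((mem_powersetCard.mp hS).1 h)).1 rfl
  refine sum_nbij' (insert i) (erase · i) (fun S hS => ?_) (fun T hT => ?_)
    (fun S hS => erase_insert (hiS S hS)) (fun T hT => insert_erase (mem_filter.mp hT).2)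
    (fun _ _ => rfl)
  · obtain ⟨hSU, hSm⟩ := mem_powersetCard.mp hS
    refine mem_filter.mpr ⟨mem_powersetCard.mpr ⟨?_, ?_⟩, mem_insert_self i S⟩
    · exact insert_subset hi (hSU.trans (erase_subset _ _))
    · rw [card_insert_of_notMem (hiS S hS), hSm]
  · obtain ⟨hT, hiT⟩ := mem_filter.mp hT
    refine mem_powersetCard.mpr ⟨erase_subset_erase i (mem_powersetCard.mp hT).1, ?_⟩
    rw [card_erase_of_mem hiT, (mem_powersetCard.mp hT).2, Nat.add_sub_cancel]

lemma sum_mul_esymmOn_erase (x : α → R) (m : ℕ) (U : Finset α) :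
    ∑ i ∈ U, x i * esymmOn x m (U.erase i) = (m + 1) * esymmOn x (m + 1) U := by
  calc ∑ i ∈ U, x i * esymmOn x m (U.erase i)
      = ∑ i ∈ U, ∑ T ∈ U.powersetCard (m + 1) with i ∈ T, ∏ j ∈ T, x j := by
        refine sum_congr rfl fun i hi => ?_
        rw [esymmOn, mul_sum, ← sum_prod_insert_powersetCard_erase x m hi]
        refine sum_congr rfl fun S hS => (prod_insert fun h => ?_).symm
        exact (mem_erase.mp ((mem_powersetCard.mp hS).1 h)).1 rfl
    _ = ∑ T ∈ U.powersetCard (m + 1), ∑ i ∈ T, ∏ j ∈ T, x j := by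
        refine sum_comm' fun i T => ?_
        simp only [mem_filter, mem_powersetCard]
        exact ⟨fun h => ⟨h.2.2, h.2.1⟩, fun h => ⟨h.2.1 h.1, h.2, h.1⟩⟩
    _ = (m + 1) * esymmOn x (m + 1) U := by
        rw [esymmOn, mul_sum]
        refine sum_congr rfl fun T hT => ?_
        rw [sum_const, (mem_powersetCard.mp hT).2, nsmul_eq_mul]
        push_cast; ring

end ElementarySymmetric

lemma sum_mul_sub_one_mul_esymmOn_erase {α R : Type*} [DecidableEq α] [CommRing R]
    (x : α → R) (m : ℕ) (U : Finset α) :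
    ∑ i ∈ U, x i * (x i - 1) * esymmOn x m (U.erase i)
      = ((∑ i ∈ U, x i) - (m + 1)) * esymmOn x (m + 1) U - (m + 2) * esymmOn x (m + 2) U := by
  have hsplit : ∀ i ∈ U, x i * esymmOn x m (U.erase i)
      = esymmOn x (m + 1) U - esymmOn x (m + 1) (U.erase i) := fun i hi => by
    rw [← insert_erase hi, esymmOn_insert x m (notMem_erase i U), erase_insert_eq_erase,
      erase_idem]
    ring
  have hsq : ∑ i ∈ U, x i * (x i * esymmOn x m (U.erase i))
      = (∑ i ∈ U, x i) * esymmOn x (m + 1) U - (m + 2) * esymmOn x (m + 2) U := by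
    rw [sum_congr rfl fun i hi => by rw [hsplit i hi]]
    simp only [mul_sub, sum_sub_distrib, ← sum_mul, sum_mul_esymmOn_erase x (m + 1) U]
    push_cast
    ring
  calc ∑ i ∈ U, x i * (x i - 1) * esymmOn x m (U.erase i)
      = ∑ i ∈ U, x i * (x i * esymmOn x m (U.erase i))
          - ∑ i ∈ U, x i * esymmOn x m (U.erase i) := by
        rw [← sum_sub_distrib]; exact sum_congr rfl fun i _ => by ring
    _ = _ := by rw [hsq, sum_mul_esymmOn_erase]; ring

section InjectiveTuples

variable {α R : Type*} [Fintype α] [DecidableEq α] [CommSemiring R]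

def injTuples (m : ℕ) (U : Finset α) : Finset (Fin m → α) :=
  univ.filter fun g => Function.Injective g ∧ ∀ j, g j ∈ U

lemma sum_injTuples_succ (m : ℕ) (U : Finset α) (F : (Fin (m + 1) → α) → R) :
    ∑ g ∈ injTuples (m + 1) U, F g
      = ∑ i ∈ U, ∑ h ∈ injTuples m (U.erase i), F (Fin.cons i h) := by
  rw [sum_sigma']
  refine (sum_nbij' (fun q : (_ : α) × (Fin m → α) => (Fin.cons q.1 q.2 : Fin (m + 1) → α))
    (fun g => ⟨g 0, Fin.tail g⟩)
    (fun q hq => ?_) (fun g hg => ?_) (fun _ _ => by simp) (fun _ _ => by simp)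
    (fun _ _ => rfl)).symm
  · simp only [mem_sigma, injTuples, mem_filter, mem_univ, true_and] at hq ⊢
    obtain ⟨hi, hinj, hmem⟩ := hq
    refine ⟨Fin.cons_injective_iff.mpr ⟨fun ⟨j, hj⟩ => (mem_erase.mp (hmem j)).1 hj, hinj⟩,
      Fin.cases (by simpa using hi) fun j => by simpa using (mem_erase.mp (hmem j)).2⟩
  · simp only [injTuples, mem_filter, mem_univ, true_and, mem_sigma] at hg ⊢
    obtain ⟨hinj, hmem⟩ := hg
    refine ⟨hmem 0, fun a b hab => Fin.succ_injective _ (hinj hab), fun j => ?_⟩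
    exact mem_erase.mpr ⟨fun h => Fin.succ_ne_zero j (hinj h), hmem j.succ⟩

lemma sum_injTuples_prod (x : α → R) (m : ℕ) (U : Finset α) :
    ∑ g ∈ injTuples m U, ∏ j, x (g j) = m.factorial * esymmOn x m U := by
  induction m generalizing U with
  | zero =>
    have hzero : injTuples 0 U = univ := by
      ext g
      simp [injTuples, Function.injective_of_subsingleton]
    simp [hzero, esymmOn]
  | succ m ih =>
    simp only [sum_injTuples_succ, Fin.prod_univ_succ, Fin.cons_zero, Fin.cons_succ, ← mul_sum,
      ih, mul_left_comm (x _), ← mul_sum, sum_mul_esymmOn_erase, Nat.factorial_succ]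
    push_cast
    ring

lemma sum_injTuples_mul_prod_succ (w x : α → R) (m : ℕ) (U : Finset α) :
    ∑ g ∈ injTuples (m + 1) U, w (g 0) * ∏ j : Fin m, x (g j.succ)
      = m.factorial * ∑ i ∈ U, w i * esymmOn x m (U.erase i) := by
  simp only [sum_injTuples_succ, Fin.cons_zero, Fin.cons_succ, ← mul_sum, sum_injTuples_prod,
    mul_left_comm (w _)]

end InjectiveTuples

lemma card_filter_exists_eq_sum {α γ : Type*} [DecidableEq α] (S : Finset α) {P : γ → Prop}
    (T : Finset γ) (hT : ∀ g, g ∈ T ↔ P g) (E : γ → α → Prop)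
    (hE : ∀ g g' f, E g f → E g' f → g = g')
    [DecidablePred fun f => ∃ g, P g ∧ E g f] [∀ g, DecidablePred (E g)] :
    #(S.filter fun f => ∃ g, P g ∧ E g f) = ∑ g ∈ T, #(S.filter (E g)) := by
  have hunion : (S.filter fun f => ∃ g, P g ∧ E g f) = T.biUnion fun g => S.filter (E g) := by
    ext f
    simp only [mem_filter, mem_biUnion, hT]
    tauto
  rw [hunion, card_biUnion]
  exact fun g _ g' _ hne => disjoint_left.mpr fun f hf hf' =>
    hne (hE g g' f (mem_filter.mp hf).2 (mem_filter.mp hf').2)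

section Colorings

variable {n s : ℕ} {c : Fin s → ℕ}

noncomputable def extending (c : Fin s → ℕ) (D : Finset (Fin n)) (p : Fin n → Fin s) :
    Finset (Fin n → Fin s) :=
  (colorings n s c).filter fun f => ∀ w ∈ D, f w = p w

lemma comp_perm_mem_colorings {f : Fin n → Fin s} (hf : f ∈ colorings n s c)
    (σ : Equiv.Perm (Fin n)) : f ∘ σ ∈ colorings n s c := by
  simp only [colorings, mem_filter, mem_univ, true_and] at hf ⊢
  intro i
  rw [← hf i]
  exact card_equiv σ fun v => by simp

lemma comp_swap_mem_extending_filter {D : Finset (Fin n)} {p : Fin n → Fin s} {v w : Fin n}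
    (hv : v ∉ D) (hw : w ∉ D) {i : Fin s} {f : Fin n → Fin s}
    (hf : f ∈ (extending c D p).filter fun f => f v = i) :
    f ∘ Equiv.swap v w ∈ (extending c D p).filter fun f => f w = i := by
  simp only [extending, mem_filter] at hf ⊢
  obtain ⟨⟨hfc, hfD⟩, hfv⟩ := hf
  refine ⟨⟨comp_perm_mem_colorings hfc _, fun u hu => ?_⟩, by simpa using hfv⟩
  rw [Function.comp_apply, Equiv.swap_apply_of_ne_of_ne (ne_of_mem_of_not_mem hu hv)
    (ne_of_mem_of_not_mem hu hw), hfD u hu]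

lemma card_extending_filter_eq {D : Finset (Fin n)} (p : Fin n → Fin s) {v w : Fin n}
    (hv : v ∉ D) (hw : w ∉ D) (i : Fin s) :
    #((extending c D p).filter fun f => f w = i) = #((extending c D p).filter fun f => f v = i) :=
  card_nbij' (· ∘ Equiv.swap v w) (· ∘ Equiv.swap v w)
    (fun f hf => by simpa [Equiv.swap_comm] using comp_swap_mem_extending_filter hw hv hf)
    (fun f hf => comp_swap_mem_extending_filter hv hw hf)
    (fun f _ => by ext; simp) (fun f _ => by ext; simp)

lemma sum_card_extending_filter (D : Finset (Fin n)) (p : Fin n → Fin s) (i : Fin s) :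
    ∑ w ∈ Dᶜ, #((extending c D p).filter fun f => f w = i)
      = #(extending c D p) * (c i - #(D.filter fun w => p w = i)) := by
  have hfiber : ∀ f ∈ extending c D p,
      ∑ w ∈ Dᶜ, (if f w = i then 1 else 0) = c i - #(D.filter fun w => p w = i) := by
    intro f hf
    obtain ⟨hfc, hfD⟩ := mem_filter.mp hf
    have hclass : ∑ w, (if f w = i then 1 else 0) = c i := by
      rw [← card_filter]; exact (mem_filter.mp hfc).2 i
    have hD : ∑ w ∈ D, (if f w = i then 1 else 0) = #(D.filter fun w => p w = i) := by
      rw [← card_filter]; exact congrArg card (filter_congr fun w hw => by rw [hfD w hw])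
    rw [← sum_compl_add_sum D, hD] at hclass
    omega
  calc ∑ w ∈ Dᶜ, #((extending c D p).filter fun f => f w = i)
      = ∑ f ∈ extending c D p, ∑ w ∈ Dᶜ, (if f w = i then 1 else 0) := by
        simp only [card_filter]; exact sum_comm
    _ = _ := by rw [sum_congr rfl hfiber, sum_const, smul_eq_mul]

lemma card_extending_filter_mul {D : Finset (Fin n)} (p : Fin n → Fin s) {v : Fin n}
    (hv : v ∉ D) (i : Fin s) :
    #((extending c D p).filter fun f => f v = i) * (n - #D)
      = #(extending c D p) * (c i - #(D.filter fun w => p w = i)) := by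
  rw [← sum_card_extending_filter, sum_congr rfl fun w hw =>
    card_extending_filter_eq p hv (mem_compl.mp hw) i, sum_const, smul_eq_mul, card_compl,
    Fintype.card_fin, mul_comm]

lemma extending_insert (D : Finset (Fin n)) (p : Fin n → Fin s) (v : Fin n) :
    extending c (insert v D) p = (extending c D p).filter fun f => f v = p v := by
  ext f
  simp only [extending, mem_filter, forall_mem_insert]
  tauto

lemma prod_descFactorial_card_filter_insert (D : Finset (Fin n)) (p : Fin n → Fin s) {v : Fin n}
    (hv : v ∉ D) :
    ∏ i, (c i).descFactorial #((insert v D).filter fun w => p w = i)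
      = (c (p v) - #(D.filter fun w => p w = p v))
          * ∏ i, (c i).descFactorial #(D.filter fun w => p w = i) := by
  have hfactor : ∀ i, (c i).descFactorial #((insert v D).filter fun w => p w = i)
      = (if p v = i then c i - #(D.filter fun w => p w = i) else 1)
          * (c i).descFactorial #(D.filter fun w => p w = i) := by
    intro i
    rw [filter_insert]
    split_ifs with h
    · rw [card_insert_of_notMem fun hvD => hv (mem_filter.mp hvD).1, Nat.descFactorial_succ]
    · rw [one_mul]
  rw [prod_congr rfl fun i _ => hfactor i, prod_mul_distrib, prod_ite_eq]
  simp

lemma card_extending_mul_descFactorial (D : Finset (Fin n)) (p : Fin n → Fin s) :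
    #(extending c D p) * n.descFactorial #D
      = #(colorings n s c) * ∏ i, (c i).descFactorial #(D.filter fun w => p w = i) := by
  induction D using Finset.induction_on with
  | empty => simp [extending]
  | @insert v D hv ih =>
    rw [extending_insert, card_insert_of_notMem hv, Nat.descFactorial_succ,
      prod_descFactorial_card_filter_insert D p hv, ← mul_assoc,
      card_extending_filter_mul p hv, mul_right_comm, ih]
    ring

lemma colorings_nonempty (hsum : ∑ i, c i = n) : (colorings n s c).Nonempty := by
  let e : (Σ i : Fin s, Fin (c i)) ≃ Fin n := Fintype.equivFinOfCardEq (by simp [hsum])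
  refine ⟨fun v => (e.symm v).1, mem_filter.mpr ⟨mem_univ _, fun i => ?_⟩⟩
  calc #(univ.filter fun v => (e.symm v).1 = i)
      = #(univ.filter fun x : Σ j : Fin s, Fin (c j) => x.1 = i) :=
        card_equiv e.symm fun v => by simp
    _ = c i := by
        rw [card_filter, ← univ_sigma_univ, sum_sigma]
        simp [apply_ite card]

lemma card_colorings_const_on_blocks_mul {ι : Type*} [Fintype ι] {A : ι → Finset (Fin n)}
    (hdisj : Pairwise (Function.onFun Disjoint A)) {g : ι → Fin s} (hg : Function.Injective g) :
    #((colorings n s c).filter fun f => ∀ j, ∀ v ∈ A j, f v = g j)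
        * n.descFactorial (∑ j, #(A j))
      = #(colorings n s c) * ∏ j, (c (g j)).descFactorial #(A j) := by
  obtain hempty | ⟨f₀, -⟩ := (colorings n s c).eq_empty_or_nonempty
  · simp [hempty]
  set D := univ.biUnion A
  -- `f₀` only supplies the irrelevant values of `p` off the blocks.
  let p : Fin n → Fin s := fun v => if h : ∃ j, v ∈ A j then g h.choose else f₀ v
  have hpA : ∀ j, ∀ v ∈ A j, p v = g j := fun j v hv => by
    have hex : ∃ j, v ∈ A j := ⟨j, hv⟩
    have hj : hex.choose = j := by
      by_contra hne
      exact disjoint_left.mp (hdisj hne) hex.choose_spec hv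
    simp only [p, dif_pos hex, hj]
  have hext : ((colorings n s c).filter fun f => ∀ j, ∀ v ∈ A j, f v = g j) = extending c D p := by
    ext f
    simp only [extending, mem_filter]
    refine and_congr_right fun _ => ⟨fun h w hw => ?_, fun h j v hv => ?_⟩
    · obtain ⟨j, -, hj⟩ := mem_biUnion.mp hw
      rw [h j w hj, hpA j w hj]
    · rw [h v (mem_biUnion.mpr ⟨j, mem_univ j, hv⟩), hpA j v hv]
  have hcolor : ∀ w ∈ D, ∃ j, w ∈ A j ∧ p w = g j := fun w hw => by
    obtain ⟨j, -, hj⟩ := mem_biUnion.mp hw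
    exact ⟨j, hj, hpA j w hj⟩
  have hblock : ∀ j, D.filter (fun w => p w = g j) = A j := fun j => by
    ext w
    refine ⟨fun hw => ?_, fun hw =>
      mem_filter.mpr ⟨mem_biUnion.mpr ⟨j, mem_univ j, hw⟩, hpA j w hw⟩⟩
    obtain ⟨hwD, hpw⟩ := mem_filter.mp hw
    obtain ⟨j', hj', hpj'⟩ := hcolor w hwD
    rwa [← hg (hpj'.symm.trans hpw)]
  have hunused : ∀ i ∉ univ.image g, (c i).descFactorial #(D.filter fun w => p w = i) = 1 := by
    intro i hi
    rw [filter_false_of_mem fun w hw hpw => ?_, card_empty, Nat.descFactorial_zero]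
    obtain ⟨j, -, hpj⟩ := hcolor w hw
    exact hi (mem_image.mpr ⟨j, mem_univ j, hpj ▸ hpw⟩)
  rw [hext, ← card_biUnion fun j _ j' _ h => hdisj h, card_extending_mul_descFactorial,
    ← prod_subset (subset_univ _) fun i _ hi => hunused i hi, prod_image fun _ _ _ _ h => hg h]
  simp only [hblock]

end Colorings

lemma cast_esymmVal {R : Type*} [CommSemiring R] (s : ℕ) (c : Fin s → ℕ) (m : ℕ) :
    (esymmVal s c m : R) = esymmOn (fun i => (c i : R)) m univ := by
  simp [esymmVal, esymmOn]

lemma cast_sum_injTuples_descFactorial_two_mul_prod {s n : ℕ} {c : Fin s → ℕ}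
    (hsum : ∑ i, c i = n) (m : ℕ) :
    ((∑ g ∈ injTuples (m + 1) univ, (c (g 0)).descFactorial 2 * ∏ j : Fin m, c (g j.succ) : ℕ) : ℝ)
      = m.factorial * (((n : ℝ) - (m + 1)) * esymmVal s c (m + 1)
          - (m + 2) * esymmVal s c (m + 2)) := by
  push_cast
  rw [sum_injTuples_mul_prod_succ (fun i => ((c i).descFactorial 2 : ℝ)) (fun i => (c i : ℝ)),
    cast_esymmVal, cast_esymmVal, ← hsum, Nat.cast_sum, ← sum_mul_sub_one_mul_esymmOn_erase]
  simp only [Nat.cast_descFactorial_two]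

section Blocks

variable {n s k : ℕ} {c : Fin s → ℕ}

lemma sum_card_le_of_pairwise_disjoint {ι : Type*} [Fintype ι] {A : ι → Finset (Fin n)}
    (hdisj : Pairwise (Function.onFun Disjoint A)) : ∑ j, #(A j) ≤ n :=
  (card_biUnion fun _ _ _ _ h => hdisj h).symm.trans_le (card_le_univ _) |>.trans_eq
    (Fintype.card_fin n)

lemma colProb_exists_injective_eq_sum {A : Fin k → Finset (Fin n)} (hA : ∀ j, (A j).Nonempty) :
    colProb n s c (fun f => ∃ g : Fin k → Fin s, Function.Injective g ∧ ∀ j, ∀ v ∈ A j, f v = g j)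
      = (∑ g ∈ injTuples k univ, #((colorings n s c).filter fun f => ∀ j, ∀ v ∈ A j, f v = g j))
          / #(colorings n s c) := by
  have hunique : ∀ g g' : Fin k → Fin s, ∀ f : Fin n → Fin s,
      (∀ j, ∀ v ∈ A j, f v = g j) → (∀ j, ∀ v ∈ A j, f v = g' j) → g = g' := by
    intro g g' f hg hg'
    funext j
    obtain ⟨v, hv⟩ := hA j
    rw [← hg j v hv, hg' j v hv]
  -- `colProb` decides its event classically; `filter_congr_decidable` restores the usual instance.
  rw [colProb, filter_congr_decidable, card_filter_exists_eq_sum _ (P := Function.Injective)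
    (injTuples k univ) (fun g => by simp [injTuples])
    (fun (g : Fin k → Fin s) (f : Fin n → Fin s) => ∀ j, ∀ v ∈ A j, f v = g j) hunique]

lemma cast_card_colorings_const_on_blocks {m : ℕ} {A : Fin (m + 1) → Finset (Fin n)}
    (hdisj : Pairwise (Function.onFun Disjoint A)) (hA0 : #(A 0) = 2)
    (hAsucc : ∀ j : Fin m, #(A j.succ) = 1) {g : Fin (m + 1) → Fin s}
    (hg : Function.Injective g) :
    (#((colorings n s c).filter fun f => ∀ j, ∀ v ∈ A j, f v = g j) : ℝ)
      = #(colorings n s c) * ((c (g 0)).descFactorial 2 * ∏ j : Fin m, c (g j.succ) : ℕ)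
          / n.descFactorial (m + 2) := by
  have hsize : ∑ j, #(A j) = m + 2 := by simp [Fin.sum_univ_succ, hA0, hAsucc]; ring
  have hdesc : (n.descFactorial (m + 2) : ℝ) ≠ 0 := by
    exact_mod_cast (Nat.descFactorial_pos.mpr (hsize ▸ sum_card_le_of_pairwise_disjoint hdisj)).ne'
  have hcount := card_colorings_const_on_blocks_mul (c := c) hdisj hg
  rw [filter_congr_decidable, hsize] at hcount
  simp only [Fin.prod_univ_succ, hA0, hAsucc, Nat.descFactorial_one] at hcount
  rw [eq_div_iff hdesc]
  exact_mod_cast hcount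

end Blocks

theorem stmt4_general (n s k : ℕ)
    (c : Fin s → ℕ) (hsum : ∑ i, c i = n)
    (hk1 : 1 ≤ k)
    (A : Fin k → Finset (Fin n))
    (hdisj : ∀ j j' : Fin k, j ≠ j' → Disjoint (A j) (A j'))
    (hA1 : (A ⟨0, hk1⟩).card = 2)
    (hArest : ∀ j : Fin k, j ≠ ⟨0, hk1⟩ → (A j).card = 1) :
    colProb n s c
        (fun f => ∃ g : Fin k → Fin s, Function.Injective g ∧ ∀ j, ∀ v ∈ A j, f v = g j)
      = (((k - 1).factorial : ℝ) / (n.descFactorial (k + 1) : ℝ)) *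
          (((n : ℝ) - (k : ℝ)) * (esymmVal s c k : ℝ)
            - ((k : ℝ) + 1) * (esymmVal s c (k + 1) : ℝ)) := by
  obtain ⟨m, rfl⟩ : ∃ m, k = m + 1 := ⟨k - 1, by omega⟩
  have hA0 : #(A 0) = 2 := hA1
  have hAsucc : ∀ j : Fin m, #(A j.succ) = 1 := fun j => hArest j.succ (Fin.succ_ne_zero j)
  have hne : ∀ j, (A j).Nonempty :=
    Fin.cases (card_pos.mp (by omega)) fun j => card_pos.mp (by rw [hAsucc j]; omega)
  have hblock := fun g (hg : g ∈ injTuples (m + 1) univ) => cast_card_colorings_const_on_blocks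
    (c := c) (fun j j' h => hdisj j j' h) hA0 hAsucc (mem_filter.mp hg).2.1
  have htotal : (#(colorings n s c) : ℝ) ≠ 0 := by
    exact_mod_cast (colorings_nonempty hsum).card_pos.ne'
  rw [colProb_exists_injective_eq_sum hne, Nat.cast_sum, sum_congr rfl hblock, ← sum_div,
    ← mul_sum, ← Nat.cast_sum, cast_sum_injTuples_descFactorial_two_mul_prod hsum]
  field_simp
  push_cast
  ring

/-- For pairwise disjoint sets with `|A_1| = 2` and `|A_j| = 1` for `j ≠ 1`,
the probability that each `A j` is monochromatic with pairwise distinct colors equals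
`((k-1)!/n^{(k+1)}) [(n-k) e_k - (k+1) e_{k+1}]`. -/
theorem stmt4 (n s k : ℕ) (hs2 : 2 ≤ s) (hsn : s ≤ n)
    (c : Fin s → ℕ) (hpos : ∀ i, 0 < c i) (hsum : ∑ i, c i = n)
    (G : SimpleGraph (Fin n))
    (hk1 : 1 ≤ k) (hks : k ≤ s)
    (A : Fin k → Finset (Fin n))
    (hdisj : ∀ j j' : Fin k, j ≠ j' → Disjoint (A j) (A j'))
    (hA1 : (A ⟨0, hk1⟩).card = 2)
    (hArest : ∀ j : Fin k, j ≠ ⟨0, hk1⟩ → (A j).card = 1) :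
    colProb n s c
        (fun f => ∃ g : Fin k → Fin s, Function.Injective g ∧ ∀ j, ∀ v ∈ A j, f v = g j)
      = (((k - 1).factorial : ℝ) / (n.descFactorial (k + 1) : ℝ)) *
          (((n : ℝ) - (k : ℝ)) * (esymmVal s c k : ℝ)
            - ((k : ℝ) + 1) * (esymmVal s c (k + 1) : ℝ)) :=
  stmt4_general n s k c hsum hk1 A hdisj hA1 hArest
end

section
/- Let X be a real random variable on a probability space with 0 ≤ X ≤ u almost surely, for some constant u > 0, and let 0 ≤ θ < 1. Then P( |X − E[X]| > θ·E[ |X − E[X]| ] ) ≥ (1 − θ)² · Var(X) / u². -/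
/-!
With `m = E[X]` and `Y = |X - m|` we have `0 ≤ Y ≤ u`, hence `Var X = E[Y²] ≤ u E[Y]`.
Splitting `E[Y]` along `A = {Y > θ E[Y]}` gives `E[Y] ≤ u P(A) + θ E[Y]`, that is
`(1 - θ) E[Y] ≤ u P(A)`. Multiplying the two bounds yields `(1 - θ)² Var X ≤ u² P(A)`.
-/

open MeasureTheory ProbabilityTheory

section

variable {Ω : Type*} [MeasurableSpace Ω] {μ : Measure Ω}

theorem ae_abs_sub_integral_le_of_mem_Icc [IsProbabilityMeasure μ] {X : Ω → ℝ} {a b : ℝ}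
    (hX : AEMeasurable X μ) (hb : ∀ᵐ ω ∂μ, X ω ∈ Set.Icc a b) :
    ∀ᵐ ω ∂μ, |X ω - μ[X]| ≤ b - a := by
  have hmean : μ[X] ∈ Set.Icc a b :=
    (convex_Icc a b).integral_mem isClosed_Icc hb
      ((memLp_of_bounded hb hX.aestronglyMeasurable 1).integrable le_rfl)
  filter_upwards [hb] with ω hω
  exact abs_sub_le_of_le_of_le hω.1 hω.2 hmean.1 hmean.2

theorem variance_le_mul_integral_abs_sub [IsFiniteMeasure μ] {X : Ω → ℝ} {c : ℝ}
    (hX : AEMeasurable X μ) (hc : ∀ᵐ ω ∂μ, |X ω - μ[X]| ≤ c) :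
    variance X μ ≤ c * ∫ ω, |X ω - μ[X]| ∂μ := by
  have hdev : AEStronglyMeasurable (fun ω => X ω - μ[X]) μ :=
    (hX.sub aemeasurable_const).aestronglyMeasurable
  have hint : Integrable (fun ω => |X ω - μ[X]|) μ :=
    Integrable.of_bound hdev.norm c (by simpa using hc)
  have hsq : ∀ᵐ ω ∂μ, (X ω - μ[X]) ^ 2 ≤ c * |X ω - μ[X]| := by
    filter_upwards [hc] with ω hω
    rw [← sq_abs, sq]
    exact mul_le_mul_of_nonneg_right hω (abs_nonneg _)
  rw [variance_eq_integral hX, ← integral_const_mul]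
  refine integral_mono_ae ?_ (hint.const_mul c) hsq
  refine (hint.const_mul c).mono' (hdev.pow 2) ?_
  filter_upwards [hsq] with ω hω
  rwa [Real.norm_eq_abs, abs_of_nonneg (sq_nonneg _)]

theorem one_sub_mul_integral_le_mul_measureReal_lt [IsProbabilityMeasure μ] {Y : Ω → ℝ}
    {u θ : ℝ} (hY : Measurable Y) (hb : ∀ᵐ ω ∂μ, Y ω ∈ Set.Icc 0 u) (hθ : 0 ≤ θ) :
    (1 - θ) * μ[Y] ≤ u * μ.real {ω | θ * μ[Y] < Y ω} := by
  set A := {ω | θ * μ[Y] < Y ω}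
  have hA : MeasurableSet A := measurableSet_lt measurable_const hY
  have hint : Integrable Y μ := (memLp_of_bounded hb hY.aestronglyMeasurable 1).integrable le_rfl
  have hmean : 0 ≤ μ[Y] := integral_nonneg_of_ae (hb.mono fun ω h => h.1)
  have hlarge : ∫ ω in A, Y ω ∂μ ≤ u * μ.real A :=
    calc ∫ ω in A, Y ω ∂μ ≤ ∫ _ in A, u ∂μ :=
          setIntegral_mono_ae hint.integrableOn (integrable_const u).integrableOn
            (hb.mono fun ω h => h.2)
      _ = u * μ.real A := by rw [setIntegral_const, smul_eq_mul, mul_comm]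
  have hsmall : ∫ ω in Aᶜ, Y ω ∂μ ≤ θ * μ[Y] :=
    calc ∫ ω in Aᶜ, Y ω ∂μ ≤ ∫ _ in Aᶜ, θ * μ[Y] ∂μ :=
          setIntegral_mono_on hint.integrableOn (integrable_const _).integrableOn hA.compl
            fun ω hω => not_lt.1 hω
      _ = μ.real Aᶜ * (θ * μ[Y]) := by rw [setIntegral_const, smul_eq_mul]
      _ ≤ θ * μ[Y] := mul_le_of_le_one_left (mul_nonneg hθ hmean) measureReal_le_one
  linarith [integral_add_compl hA hint]

end

theorem stmt12_general {Ω : Type*} [MeasurableSpace Ω] (μ : Measure Ω) [IsProbabilityMeasure μ]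
    (X : Ω → ℝ) (hX : Measurable X)
    (u : ℝ) (hbound : ∀ᵐ ω ∂μ, 0 ≤ X ω ∧ X ω ≤ u)
    (θ : ℝ) (hθ0 : 0 ≤ θ) (hθ1 : θ < 1) :
    (1 - θ) ^ 2 * ProbabilityTheory.variance X μ / u ^ 2
      ≤ (μ {ω | θ * (∫ ω', |X ω' - ∫ ω'', X ω'' ∂μ| ∂μ)
            < |X ω - ∫ ω'', X ω'' ∂μ|}).toReal := by
  have hdev : ∀ᵐ ω ∂μ, |X ω - μ[X]| ≤ u := by
    simpa using ae_abs_sub_integral_le_of_mem_Icc hX.aemeasurable hbound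
  have hvar := variance_le_mul_integral_abs_sub hX.aemeasurable hdev
  have htail := one_sub_mul_integral_le_mul_measureReal_lt (Y := fun ω => |X ω - μ[X]|)
    (by fun_prop) (hdev.mono fun ω h => ⟨abs_nonneg _, h⟩) hθ0
  obtain ⟨ω, hX0, hXu⟩ := hbound.exists
  have hu : 0 ≤ u := hX0.trans hXu
  set E := ∫ ω, |X ω - μ[X]| ∂μ
  set P := μ.real {ω | θ * E < |X ω - μ[X]|}
  refine div_le_of_le_mul₀ (sq_nonneg u) measureReal_nonneg ?_
  calc (1 - θ) ^ 2 * variance X μ ≤ (1 - θ) ^ 2 * (u * E) := by gcongr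
    _ = (1 - θ) * u * ((1 - θ) * E) := by ring
    _ ≤ (1 - θ) * u * (u * P) := mul_le_mul_of_nonneg_left htail (mul_nonneg (by linarith) hu)
    _ ≤ P * u ^ 2 := by
      nlinarith [mul_nonneg hθ0 (mul_nonneg (sq_nonneg u) (measureReal_nonneg : 0 ≤ P))]

/-- (Bounded-range Paley–Zygmund variant.) If `0 ≤ X ≤ u` a.s. with
`u > 0` and `0 ≤ θ < 1`, then
`P(|X - E[X]| > θ E[|X - E[X]|]) ≥ (1-θ)² Var(X)/u²`. -/
theorem stmt12 {Ω : Type*} [MeasurableSpace Ω] (μ : Measure Ω) [IsProbabilityMeasure μ]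
    (X : Ω → ℝ) (hX : Measurable X)
    (u : ℝ) (hu : 0 < u) (hbound : ∀ᵐ ω ∂μ, 0 ≤ X ω ∧ X ω ≤ u)
    (θ : ℝ) (hθ0 : 0 ≤ θ) (hθ1 : θ < 1) :
    (1 - θ) ^ 2 * ProbabilityTheory.variance X μ / u ^ 2
      ≤ (μ {ω | θ * (∫ ω', |X ω' - ∫ ω'', X ω'' ∂μ| ∂μ)
            < |X ω - ∫ ω'', X ω'' ∂μ|}).toReal :=
  stmt12_general μ X hX u hbound θ hθ0 hθ1
end

section
/- Let (X_n) and (Y_n) be sequences of real random variables on a common probability space such that 0 ≤ X_n ≤ κ·Y_n almost surely for some constant κ > 0, the expectations E[Y_n] are positive, and Y_n / E[Y_n] → 1 in probability. Then E[X_n]/E[Y_n] → 0 if and only if X_n / Y_n → 0 in probability. -/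
/-!
Put `Z n = Y n / E[Y n]` and `W n = X n / Y n`. Almost surely `0 ≤ W n ≤ κ` and
`X n / E[Y n] = W n * Z n`, so `|E[W n] - E[X n] / E[Y n]| ≤ κ E|Z n - 1|`. As `Z n ≥ 0`,
`E[Z n] = 1` and `Z n → 1` in probability, Scheffé's argument (`|z - 1| = 2 (1 - z)⁺ + (z - 1)`
with `(1 - z)⁺ ≤ 1`) gives `E|Z n - 1| → 0`. Hence `E[X n] / E[Y n] → 0` iff `E[W n] → 0`, and for
the uniformly bounded nonnegative `W n` this is equivalent to `W n → 0` in probability: dominated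
convergence along almost surely convergent subsequences one way, Markov's inequality the other.
-/

open MeasureTheory Filter Topology

namespace MeasureTheory

variable {α : Type*} {m : MeasurableSpace α} {μ : Measure α}

theorem TendstoInMeasure.of_dist_le {ι E F : Type*} [PseudoMetricSpace E] [PseudoMetricSpace F]
    {l : Filter ι} {f : ι → α → E} {g : α → E} {f' : ι → α → F} {g' : α → F}
    (h : TendstoInMeasure μ f l g)
    (hle : ∀ i, ∀ᵐ x ∂μ, dist (f' i x) (g' x) ≤ dist (f i x) (g x)) :
    TendstoInMeasure μ f' l g' := by
  rw [tendstoInMeasure_iff_dist] at h ⊢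
  refine fun ε hε => tendsto_of_tendsto_of_tendsto_of_le_of_le tendsto_const_nhds (h ε hε)
    (fun _ => zero_le) fun i => measure_mono_ae ?_
  filter_upwards [hle i] with x hx hε' using hε'.trans hx

theorem tendstoInMeasure_iff_measureReal_abs_lt [IsFiniteMeasure μ] {ι : Type*} {l : Filter ι}
    {f : ι → α → ℝ} {g : α → ℝ} :
    TendstoInMeasure μ f l g ↔
      ∀ ε > 0, Tendsto (fun i => μ.real {x | ε < |f i x - g x|}) l (𝓝 0) := by
  simp only [tendstoInMeasure_iff_measureReal_norm, Real.norm_eq_abs]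
  refine ⟨fun h ε hε => ?_, fun h ε hε => ?_⟩
  · exact squeeze_zero (fun _ => measureReal_nonneg) (fun i => measureReal_mono
      fun x (hx : ε < _) => hx.le) (h ε hε)
  · exact squeeze_zero (fun _ => measureReal_nonneg) (fun i => measureReal_mono
      fun x (hx : ε ≤ _) => (half_lt_self hε).trans_le hx) (h (ε / 2) (half_pos hε))

theorem tendsto_integral_of_tendstoInMeasure_of_dominated {G : Type*} [NormedAddCommGroup G]
    [NormedSpace ℝ G] {F : ℕ → α → G} {f : α → G} (bound : α → ℝ)
    (hF : ∀ n, AEStronglyMeasurable (F n) μ) (h_int : Integrable bound μ)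
    (h_bound : ∀ n, ∀ᵐ x ∂μ, ‖F n x‖ ≤ bound x) (h_lim : TendstoInMeasure μ F atTop f) :
    Tendsto (fun n => ∫ x, F n x ∂μ) atTop (𝓝 (∫ x, f x ∂μ)) := by
  refine tendsto_of_subseq_tendsto fun ns hns => ?_
  obtain ⟨ms, -, hms⟩ := (h_lim.comp hns).exists_seq_tendsto_ae
  exact ⟨ms, tendsto_integral_of_dominated_convergence bound (fun _ => hF _) h_int
    (fun _ => h_bound _) hms⟩

theorem tendstoInMeasure_zero_of_tendsto_integral {ι : Type*} {l : Filter ι} {f : ι → α → ℝ}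
    (hf : ∀ i, Integrable (f i) μ) (hf0 : ∀ i, 0 ≤ᵐ[μ] f i)
    (h : Tendsto (fun i => ∫ x, f i x ∂μ) l (𝓝 0)) : TendstoInMeasure μ f l 0 := by
  refine tendstoInMeasure_of_tendsto_eLpNorm one_ne_zero (fun i => (hf i).aestronglyMeasurable)
    aestronglyMeasurable_const ?_
  have h_eLpNorm : ∀ i, eLpNorm (f i - 0) 1 μ = ENNReal.ofReal (∫ x, f i x ∂μ) := fun i => by
    rw [sub_zero, eLpNorm_one_eq_lintegral_enorm,
      ofReal_integral_eq_lintegral_ofReal (hf i) (hf0 i)]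
    exact lintegral_congr_ae <| (hf0 i).mono fun x hx => Real.enorm_of_nonneg hx
  simpa only [h_eLpNorm, ENNReal.ofReal_zero] using ENNReal.tendsto_ofReal h

theorem tendsto_integral_abs_sub_of_tendstoInMeasure {f : ℕ → α → ℝ} {g : α → ℝ}
    (hf : ∀ n, Integrable (f n) μ) (hg : Integrable g μ) (hf0 : ∀ n, 0 ≤ᵐ[μ] f n)
    (h_int : ∀ n, ∫ x, f n x ∂μ = ∫ x, g x ∂μ) (h : TendstoInMeasure μ f atTop g) :
    Tendsto (fun n => ∫ x, |f n x - g x| ∂μ) atTop (𝓝 0) := by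
  have h_abs : ∀ n, ∫ x, |f n x - g x| ∂μ = 2 * ∫ x, max (g x - f n x) 0 ∂μ := fun n => by
    have hpt : ∀ a b : ℝ, |a - b| = 2 * max (b - a) 0 + (a - b) := fun a b => by
      rcases le_total a b with hab | hab
      · rw [abs_of_nonpos (by linarith), max_eq_left (by linarith)]; ring
      · rw [abs_of_nonneg (by linarith), max_eq_right (by linarith)]; ring
    have hpos : Integrable (fun x => max (g x - f n x) 0) μ := (hg.sub (hf n)).pos_part
    have hsub : Integrable (fun x => f n x - g x) μ := (hf n).sub hg
    simp_rw [hpt]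
    rw [integral_add (hpos.const_mul 2) hsub, integral_const_mul,
      integral_sub (hf n) hg, h_int, sub_self, add_zero]
  have h_lim : TendstoInMeasure μ (fun n x => max (g x - f n x) 0) atTop 0 :=
    h.of_dist_le fun n => Eventually.of_forall fun x => by
      simpa [Real.dist_eq, abs_sub_comm] using abs_max_sub_max_le_abs (g x - f n x) 0 0
  have h_bound : ∀ n, ∀ᵐ x ∂μ, ‖max (g x - f n x) 0‖ ≤ |g x| := fun n => by
    filter_upwards [hf0 n] with x hx
    rw [Real.norm_of_nonneg (le_max_right _ _)]
    exact max_le (by linarith [le_abs_self (g x), show 0 ≤ f n x from hx]) (abs_nonneg _)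
  simpa [h_abs] using (tendsto_integral_of_tendstoInMeasure_of_dominated (fun x => |g x|)
    (fun n => (hg.sub (hf n)).pos_part.aestronglyMeasurable) hg.abs h_bound h_lim).const_mul 2

theorem tendstoInMeasure_zero_iff_tendsto_integral [IsFiniteMeasure μ] {f : ℕ → α → ℝ} {C : ℝ}
    (hf : ∀ n, AEStronglyMeasurable (f n) μ) (hf_bdd : ∀ n, ∀ᵐ x ∂μ, f n x ∈ Set.Icc 0 C) :
    TendstoInMeasure μ f atTop 0 ↔ Tendsto (fun n => ∫ x, f n x ∂μ) atTop (𝓝 0) := by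
  have h_norm : ∀ n, ∀ᵐ x ∂μ, ‖f n x‖ ≤ C := fun n => (hf_bdd n).mono fun x hx => by
    rw [Real.norm_of_nonneg hx.1]; exact hx.2
  refine ⟨fun h => ?_, tendstoInMeasure_zero_of_tendsto_integral
    (fun n => .of_bound (hf n) C (h_norm n)) fun n => (hf_bdd n).mono fun x hx => hx.1⟩
  simpa using tendsto_integral_of_tendstoInMeasure_of_dominated (fun _ => C) hf
    (integrable_const C) h_norm h

end MeasureTheory

lemma div_mem_Icc_of_le_mul {x y κ : ℝ} (hκ : 0 ≤ κ) (hx : 0 ≤ x) (hxy : x ≤ κ * y) :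
    x / y ∈ Set.Icc 0 κ := by
  rcases hx.eq_or_lt with rfl | hx
  · simpa using hκ
  have hy : 0 < y := pos_of_mul_pos_right (hx.trans_le hxy) hκ
  exact ⟨div_nonneg hx.le hy.le, div_le_of_le_mul₀ hy.le hκ hxy⟩

lemma abs_div_sub_div_le_of_le_mul {x y κ : ℝ} (hκ : 0 ≤ κ) (hx : 0 ≤ x) (hxy : x ≤ κ * y) (e : ℝ) :
    |x / y - x / e| ≤ κ * |y / e - 1| := by
  rcases hx.eq_or_lt with rfl | hx
  · simp only [zero_div, sub_self, abs_zero]; positivity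
  have hy : 0 < y := pos_of_mul_pos_right (hx.trans_le hxy) hκ
  rw [show x / y - x / e = x / y * (1 - y / e) by field_simp, abs_mul, abs_sub_comm,
    abs_of_nonneg (div_nonneg hx.le hy.le)]
  exact mul_le_mul_of_nonneg_right (div_mem_Icc_of_le_mul hκ hx.le hxy).2 (abs_nonneg _)

lemma abs_integral_div_sub_div_integral_le {Ω : Type*} [MeasurableSpace Ω] {μ : Measure Ω}
    [IsFiniteMeasure μ] {X Y : Ω → ℝ} {κ : ℝ} (hκ : 0 ≤ κ) (hX : Integrable X μ)
    (hY : Integrable Y μ) (hbd : ∀ᵐ ω ∂μ, 0 ≤ X ω ∧ X ω ≤ κ * Y ω) :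
    |∫ ω, X ω / Y ω ∂μ - (∫ ω, X ω ∂μ) / ∫ ω, Y ω ∂μ|
      ≤ κ * ∫ ω, |Y ω / (∫ ω', Y ω' ∂μ) - 1| ∂μ := by
  have hW : Integrable (fun ω => X ω / Y ω) μ := by
    refine .of_bound (hX.aemeasurable.div hY.aemeasurable).aestronglyMeasurable κ ?_
    filter_upwards [hbd] with ω h
    have hW := div_mem_Icc_of_le_mul hκ h.1 h.2
    rw [Real.norm_of_nonneg hW.1]
    exact hW.2
  rw [← integral_div, ← integral_sub hW (hX.div_const _), ← integral_const_mul, ← Real.norm_eq_abs]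
  refine norm_integral_le_of_norm_le
    (((hY.div_const _).sub (integrable_const 1)).abs.const_mul κ) ?_
  filter_upwards [hbd] with ω h
  exact abs_div_sub_div_le_of_le_mul hκ h.1 h.2 _

/-- If `0 ≤ X_n ≤ κ Y_n` a.s., `E[Y_n] > 0` and `Y_n/E[Y_n] → 1` in
probability, then `E[X_n]/E[Y_n] → 0` iff `X_n/Y_n → 0` in probability. -/
theorem stmt18 {Ω : Type*} [MeasurableSpace Ω] (μ : Measure Ω) [IsProbabilityMeasure μ]
    (X Y : ℕ → Ω → ℝ) (κ : ℝ) (hκ : 0 < κ)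
    (hXint : ∀ n, Integrable (X n) μ) (hYint : ∀ n, Integrable (Y n) μ)
    (hbd : ∀ n, ∀ᵐ ω ∂μ, 0 ≤ X n ω ∧ X n ω ≤ κ * Y n ω)
    (hEY : ∀ n, 0 < ∫ ω, Y n ω ∂μ)
    (hYconc : ∀ ε > (0 : ℝ),
      Tendsto (fun n => (μ {ω | ε < |Y n ω / (∫ ω', Y n ω' ∂μ) - 1|}).toReal)
        atTop (nhds 0)) :
    Tendsto (fun n => (∫ ω, X n ω ∂μ) / (∫ ω, Y n ω ∂μ)) atTop (nhds 0)
      ↔ (∀ ε > (0 : ℝ),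
          Tendsto (fun n => (μ {ω | ε < |X n ω / Y n ω|}).toReal) atTop (nhds 0)) := by
  set W : ℕ → Ω → ℝ := fun n ω => X n ω / Y n ω
  have hZ_L1 : Tendsto (fun n => ∫ ω, |Y n ω / (∫ ω', Y n ω' ∂μ) - 1| ∂μ) atTop (𝓝 0) := by
    refine tendsto_integral_abs_sub_of_tendstoInMeasure (g := fun _ => 1)
      (fun n => (hYint n).div_const _) (integrable_const 1) (fun n => ?_) (fun n => ?_)
      (tendstoInMeasure_iff_measureReal_abs_lt.2 hYconc)
    · filter_upwards [hbd n] with ω h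
      exact div_nonneg (nonneg_of_mul_nonneg_right (h.1.trans h.2) hκ) (hEY n).le
    · simp [integral_div, (hEY n).ne']
  have h_diff : Tendsto (fun n => ∫ ω, W n ω ∂μ - (∫ ω, X n ω ∂μ) / ∫ ω, Y n ω ∂μ)
      atTop (𝓝 0) :=
    squeeze_zero_norm (fun n => abs_integral_div_sub_div_integral_le hκ.le (hXint n) (hYint n)
      (hbd n)) (by simpa using hZ_L1.const_mul κ)
  have h_conv : TendstoInMeasure μ W atTop 0 ↔ ∀ ε > (0 : ℝ),
      Tendsto (fun n => (μ {ω | ε < |X n ω / Y n ω|}).toReal) atTop (nhds 0) := by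
    simp only [tendstoInMeasure_iff_measureReal_abs_lt, Pi.zero_apply, sub_zero]
    rfl
  rw [← h_conv, tendstoInMeasure_zero_iff_tendsto_integral (f := W) (C := κ)
    (fun n => ((hXint n).aemeasurable.div (hYint n).aemeasurable).aestronglyMeasurable)
    (fun n => (hbd n).mono fun ω h => div_mem_Icc_of_le_mul hκ.le h.1 h.2)]
  exact ⟨fun h => by simpa using h.add h_diff, fun h => by simpa using h.sub h_diff⟩
end

section
/- Let (X_n) and (Y_n) be sequences of real random variables on a common probability space such that 0 ≤ X_n ≤ κ·Y_n almost surely for some constant κ > 0, E[Y_n] > 0, E[X_n] ≥ τ·E[Y_n] for some constant τ > 0, and Y_n / E[Y_n] → 1 in quadratic mean (L²). If X_n / E[X_n] → 1 in probability, then Var(X_n) / (E[X_n])² → 0; that is, under these hypotheses the second-moment sufficient condition for concentration is also necessary. -/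
/-!
Normalise `Z_n = X_n / E[X_n]` and `W_n = Y_n / E[Y_n]`. The hypotheses give `|Z_n| ≤ (κ/τ) |W_n|`
a.s. Since `W_n → 1` in `L²`, the family `(W_n)` is uniformly integrable in `L²`, and domination
passes this to `(Z_n)`. Vitali's convergence theorem then upgrades `Z_n → 1` in probability to
`Z_n → 1` in `L²`, and `E[(Z_n - 1)²] = Var(X_n) / E[X_n]²`.
-/

open MeasureTheory Filter Topology

theorem abs_div_le_div_mul_abs_div {x y a b κ τ : ℝ} (hκ : 0 < κ) (hτ : 0 < τ) (hb : 0 < b)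
    (hab : τ * b ≤ a) (hx : 0 ≤ x) (hxy : x ≤ κ * y) :
    |x / a| ≤ κ / τ * |y / b| := by
  have hy : 0 ≤ y := nonneg_of_mul_nonneg_right (hx.trans hxy) hκ
  have ha : 0 < a := (mul_pos hτ hb).trans_le hab
  rw [abs_of_nonneg (div_nonneg hx ha.le), abs_of_nonneg (div_nonneg hy hb.le), div_mul_div_comm]
  calc x / a ≤ κ * y / a := by gcongr
    _ ≤ κ * y / (τ * b) := by gcongr

namespace MeasureTheory

variable {α : Type*} [MeasurableSpace α] {μ : Measure α}

theorem MemLp.eLpNorm_two_eq_ofReal_sqrt {f : α → ℝ} (hf : MemLp f 2 μ) :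
    eLpNorm f 2 μ = ENNReal.ofReal √(∫ a, f a ^ 2 ∂μ) := by
  simp [hf.eLpNorm_eq_integral_rpow_norm two_ne_zero ENNReal.ofNat_ne_top, Real.sqrt_eq_rpow]

theorem MemLp.div_const {p : ENNReal} {f : α → ℝ} (hf : MemLp f p μ) (c : ℝ) :
    MemLp (fun a => f a / c) p μ := by
  simpa only [div_eq_mul_inv] using hf.mul_const c⁻¹

theorem tendsto_eLpNorm_two_zero_iff {ι : Type*} {l : Filter ι} {f : ι → α → ℝ}
    (hf : ∀ i, MemLp (f i) 2 μ) :
    Tendsto (fun i => eLpNorm (f i) 2 μ) l (𝓝 0) ↔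
      Tendsto (fun i => ∫ a, f i a ^ 2 ∂μ) l (𝓝 0) := by
  have hnonneg (i : ι) : 0 ≤ ∫ a, f i a ^ 2 ∂μ := integral_nonneg fun a => sq_nonneg _
  rw [← ENNReal.tendsto_toReal_zero_iff fun i => (hf i).eLpNorm_ne_top]
  simp_rw [fun i => (hf i).eLpNorm_two_eq_ofReal_sqrt, ENNReal.toReal_ofReal (Real.sqrt_nonneg _)]
  refine ⟨fun h => ?_, fun h => ?_⟩
  · simpa [Real.sq_sqrt (hnonneg _)] using h.pow 2
  · simpa using h.sqrt

theorem UnifIntegrable.of_ae_norm_le_mul {β : Type*} [NormedAddCommGroup β] {ι : Type*}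
    {p : ENNReal} {f g : ι → α → β} {C : ℝ} (hC : 0 < C) (hg : UnifIntegrable g p μ)
    (hfg : ∀ i, ∀ᵐ a ∂μ, ‖f i a‖ ≤ C * ‖g i a‖) :
    UnifIntegrable f p μ := by
  intro ε hε
  obtain ⟨δ, hδ, hgδ⟩ := hg (div_pos hε hC)
  refine ⟨δ, hδ, fun i s hs hμs => ?_⟩
  have hind : ∀ᵐ a ∂μ, ‖s.indicator (f i) a‖ ≤ C * ‖s.indicator (g i) a‖ := by
    filter_upwards [hfg i] with a ha
    by_cases has : a ∈ s <;> simp [has, ha]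
  calc eLpNorm (s.indicator (f i)) p μ
      ≤ ENNReal.ofReal C * eLpNorm (s.indicator (g i)) p μ :=
        eLpNorm_le_mul_eLpNorm_of_ae_le_mul hind p
    _ ≤ ENNReal.ofReal C * ENNReal.ofReal (ε / C) := by gcongr; exact hgδ i s hs hμs
    _ = ENNReal.ofReal ε := by rw [← ENNReal.ofReal_mul hC.le, mul_div_cancel₀ _ hC.ne']

theorem tendstoInMeasure_of_tendsto_measureReal_lt_dist {E ι : Type*} [PseudoMetricSpace E]
    [IsFiniteMeasure μ] {l : Filter ι} {f : ι → α → E} {g : α → E}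
    (h : ∀ ε > 0, Tendsto (fun i => μ.real {a | ε < dist (f i a) (g a)}) l (𝓝 0)) :
    TendstoInMeasure μ f l g := by
  refine tendstoInMeasure_iff_measureReal_dist.2 fun ε hε => ?_
  refine tendsto_of_tendsto_of_tendsto_of_le_of_le tendsto_const_nhds (h (ε / 2) (half_pos hε))
    (fun i => measureReal_nonneg) fun i => measureReal_mono fun a (ha : ε ≤ _) => ?_
  exact (half_lt_self hε).trans_le ha

theorem tendsto_eLpNorm_sub_of_tendstoInMeasure_of_ae_norm_le_mul {β : Type*}
    [NormedAddCommGroup β] [IsFiniteMeasure μ] {p : ENNReal} (hp : 1 ≤ p) (hp' : p ≠ ⊤)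
    {f g : ℕ → α → β} {u v : α → β} {C : ℝ} (hC : 0 < C)
    (hf : ∀ n, AEStronglyMeasurable (f n) μ) (hg : ∀ n, MemLp (g n) p μ)
    (hu : MemLp u p μ) (hv : MemLp v p μ)
    (hfg : ∀ n, ∀ᵐ a ∂μ, ‖f n a‖ ≤ C * ‖g n a‖)
    (hgv : Tendsto (fun n => eLpNorm (g n - v) p μ) atTop (𝓝 0))
    (hfu : TendstoInMeasure μ f atTop u) :
    Tendsto (fun n => eLpNorm (f n - u) p μ) atTop (𝓝 0) :=
  tendsto_Lp_finite_of_tendstoInMeasure hp hp' hf hu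
    ((unifIntegrable_of_tendsto_Lp hp hp' hg hv hgv).of_ae_norm_le_mul hC hfg) hfu

end MeasureTheory

namespace ProbabilityTheory
variable {Ω : Type*} [MeasurableSpace Ω] {μ : Measure Ω}

theorem integral_sq_div_integral_sub_one {X : Ω → ℝ} (hX : AEMeasurable X μ) (hm : μ[X] ≠ 0) :
    ∫ ω, (X ω / μ[X] - 1) ^ 2 ∂μ = Var[X; μ] / μ[X] ^ 2 := by
  rw [variance_eq_integral hX, ← integral_div]
  congr 1 with ω
  field_simp

end ProbabilityTheory

/-- If `0 ≤ X_n ≤ κ Y_n` a.s., `E[Y_n] > 0`, `E[X_n] ≥ τ E[Y_n]` with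
`τ > 0`, and `Y_n/E[Y_n] → 1` in quadratic mean, then `X_n/E[X_n] → 1` in probability
implies `Var(X_n)/E[X_n]² → 0`. -/
theorem stmt19 {Ω : Type*} [MeasurableSpace Ω] (μ : Measure Ω) [IsProbabilityMeasure μ]
    (X Y : ℕ → Ω → ℝ) (κ : ℝ) (hκ : 0 < κ)
    (hXL2 : ∀ n, MemLp (X n) 2 μ) (hYL2 : ∀ n, MemLp (Y n) 2 μ)
    (hbd : ∀ n, ∀ᵐ ω ∂μ, 0 ≤ X n ω ∧ X n ω ≤ κ * Y n ω)
    (hEY : ∀ n, 0 < ∫ ω, Y n ω ∂μ)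
    (τ : ℝ) (hτ : 0 < τ)
    (hEX : ∀ n, τ * (∫ ω, Y n ω ∂μ) ≤ ∫ ω, X n ω ∂μ)
    (hYqm : Tendsto (fun n => ∫ ω, (Y n ω / (∫ ω', Y n ω' ∂μ) - 1) ^ 2 ∂μ)
        atTop (nhds 0))
    (hXconc : ∀ ε > (0 : ℝ),
      Tendsto (fun n => (μ {ω | ε < |X n ω / (∫ ω', X n ω' ∂μ) - 1|}).toReal)
        atTop (nhds 0)) :
    Tendsto (fun n => ProbabilityTheory.variance (X n) μ / (∫ ω, X n ω ∂μ) ^ 2)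
      atTop (nhds 0) := by
  set Z : ℕ → Ω → ℝ := fun n ω => X n ω / ∫ ω', X n ω' ∂μ
  set W : ℕ → Ω → ℝ := fun n ω => Y n ω / ∫ ω', Y n ω' ∂μ
  have hZ_sub (n : ℕ) : MemLp (Z n - fun _ => 1) 2 μ := ((hXL2 n).div_const _).sub (memLp_const 1)
  have hW_sub (n : ℕ) : MemLp (W n - fun _ => 1) 2 μ := ((hYL2 n).div_const _).sub (memLp_const 1)
  have hZ_le (n : ℕ) : ∀ᵐ ω ∂μ, ‖Z n ω‖ ≤ κ / τ * ‖W n ω‖ := by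
    filter_upwards [hbd n] with ω ⟨hX0, hXY⟩
    exact abs_div_le_div_mul_abs_div hκ hτ (hEY n) (hEX n) hX0 hXY
  have hW_L2 := (tendsto_eLpNorm_two_zero_iff hW_sub).2 hYqm
  have hZ_meas : TendstoInMeasure μ Z atTop fun _ => 1 :=
    tendstoInMeasure_of_tendsto_measureReal_lt_dist <| by
      simpa only [Real.dist_eq, measureReal_def] using hXconc
  have hZ_L2 := tendsto_eLpNorm_sub_of_tendstoInMeasure_of_ae_norm_le_mul one_le_two
    ENNReal.ofNat_ne_top (div_pos hκ hτ) (fun n => ((hXL2 n).div_const _).aestronglyMeasurable)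
    (fun n => (hYL2 n).div_const _) (memLp_const 1) (memLp_const 1) hZ_le hW_L2 hZ_meas
  refine ((tendsto_eLpNorm_two_zero_iff hZ_sub).1 hZ_L2).congr fun n => ?_
  exact ProbabilityTheory.integral_sq_div_integral_sub_one (hXL2 n).aemeasurable
    ((mul_pos hτ (hEY n)).trans_le (hEX n)).ne'
end
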